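/- arXiv:1812.07231 — 2 statements merged into one kernel-verified Lean document; each statement's English description precedes it below -/
import Mathlib

section
/- Let r ≥ 1, let m₁, …, m_r be nonnegative integers, let α > -1, β > 0 and s ∈ ℝ satisfy βα + s > -1. Then the generalized Krein-like functional of Laguerre polynomials satisfies ∫₀^∞ x^{βα+s} e^{-βx} L_{m₁}^{(α)}(x) ⋯ L_{m_r}^{(α)}(x) dx = β^{-βα-s-1} Γ(βα+s+1) C(m₁+α, m₁) ⋯ C(m_r+α, m_r) · F_A^{(r)}(βα+s+1; -m₁, …, -m_r; α+1, …, α+1; 1/β, …, 1/β). -/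
open MeasureTheory Finset Real

/-- Pochhammer symbol `(a)_k = a (a+1) ⋯ (a+k-1)`. -/
noncomputable def poch (a : ℝ) (k : ℕ) : ℝ := ∏ i ∈ Finset.range k, (a + i)

/-- Generalized binomial coefficient `C(a, j) = (a-j+1)_j / j!`. -/
noncomputable def gbinom (a : ℝ) (j : ℕ) : ℝ := poch (a - j + 1) j / (j.factorial : ℝ)

/-- Generalized Laguerre polynomial `L_n^{(α)}`. -/
noncomputable def Lag (α : ℝ) (n : ℕ) (x : ℝ) : ℝ :=
  ∑ i ∈ Finset.range (n + 1),
    ((-1 : ℝ) ^ i / (i.factorial : ℝ)) * gbinom ((n : ℝ) + α) (n - i) * x ^ i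

/-- Physicists' Hermite polynomial `H_n`. -/
noncomputable def Herm (n : ℕ) (x : ℝ) : ℝ :=
  ∑ k ∈ Finset.range (n / 2 + 1),
    ((-1 : ℝ) ^ k * (n.factorial : ℝ) / ((k.factorial : ℝ) * ((n - 2 * k).factorial : ℝ))) *
      (2 * x) ^ (n - 2 * k)

/-- Jacobi polynomial `P_n^{(α,γ)}`. -/
noncomputable def Jac (α γ : ℝ) (n : ℕ) (x : ℝ) : ℝ :=
  ∑ k ∈ Finset.range (n + 1),
    gbinom ((n : ℝ) + α) (n - k) * gbinom ((n : ℝ) + γ) k *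
      ((x - 1) / 2) ^ k * ((x + 1) / 2) ^ (n - k)

/-- Terminating Lauricella function of type A. -/
noncomputable def lauricellaA {r : ℕ} (a : ℝ) (m : Fin r → ℕ) (c x : Fin r → ℝ) : ℝ :=
  ∑ j ∈ Fintype.piFinset (fun i => Finset.range (m i + 1)),
    poch a (∑ i, j i) *
      ∏ i, (poch (-(m i : ℝ)) (j i) / (poch (c i) (j i) * ((j i).factorial : ℝ)) * x i ^ (j i))

/-- Terminating Gauss hypergeometric sum `₂F₁(-k, b; c; x)`. -/
noncomputable def hyp2F1 (k : ℕ) (b c x : ℝ) : ℝ :=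
  ∑ j ∈ Finset.range (k + 1),
    poch (-(k : ℝ)) j * poch b j / (poch c j * (j.factorial : ℝ)) * x ^ j

/-- Terminating hypergeometric sum `₃F₂(-k, b₁, b₂; c₁, c₂; x)`. -/
noncomputable def hyp3F2 (k : ℕ) (b₁ b₂ c₁ c₂ x : ℝ) : ℝ :=
  ∑ j ∈ Finset.range (k + 1),
    poch (-(k : ℝ)) j * poch b₁ j * poch b₂ j /
      (poch c₁ j * poch c₂ j * (j.factorial : ℝ)) * x ^ j

/-- Gauss hypergeometric series `₂F₁(a, b; c; x)` (a terminating series when `a` or `b`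
is a nonpositive integer). -/
noncomputable def hypSum (a b c x : ℝ) : ℝ :=
  ∑' j : ℕ, poch a j * poch b j / (poch c j * (j.factorial : ℝ)) * x ^ j

/-- Terminating Appell function `F₂(a; -m₁, -m₂; c₁, c₂; x₁, x₂)`. -/
noncomputable def appellF2 (a : ℝ) (m₁ m₂ : ℕ) (c₁ c₂ x₁ x₂ : ℝ) : ℝ :=
  ∑ j₁ ∈ Finset.range (m₁ + 1), ∑ j₂ ∈ Finset.range (m₂ + 1),
    poch a (j₁ + j₂) * poch (-(m₁ : ℝ)) j₁ * poch (-(m₂ : ℝ)) j₂ /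
      (poch c₁ j₁ * poch c₂ j₂ * (j₁.factorial : ℝ) * (j₂.factorial : ℝ)) * x₁ ^ j₁ * x₂ ^ j₂

/-- `1/z!` with the convention that it vanishes for negative integers `z`. -/
noncomputable def invFacZ (z : ℤ) : ℝ := if 0 ≤ z then ((z.toNat.factorial : ℕ) : ℝ)⁻¹ else 0

/-- Pochhammer symbol extended to integer index via `(a)_k = Γ(a+k)/Γ(a)` for negative `k`. -/
noncomputable def pochZ (a : ℝ) (k : ℤ) : ℝ :=
  if 0 ≤ k then poch a k.toNat else Real.Gamma (a + (k : ℝ)) / Real.Gamma a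

/-!
In hypergeometric form `L_n^{(α)}(x) = C(n+α, n) ∑_j (-n)_j / ((α+1)_j j!) x^j`, so the product
of the `r` Laguerre polynomials is `∏ C(m_i+α, m_i)` times a multiple sum whose `j`-th term is a
monomial of degree `|j| = j₁ + ⋯ + j_r`. Integrating term by term against `x^q e^{-βx}` with
`q = βα + s` gives the moments `β^{-q-1} Γ(q+1) (q+1)_{|j|} β^{-|j|}`, which are exactly the
summands of the Lauricella function.
-/

lemma poch_add (a : ℝ) (k l : ℕ) : poch a (k + l) = poch a k * poch (a + k) l := by
  unfold poch
  rw [prod_range_add]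
  congr 1
  exact prod_congr rfl fun i _ => by push_cast; ring

lemma poch_succ (a : ℝ) (k : ℕ) : poch a (k + 1) = poch a k * (a + k) :=
  prod_range_succ _ _

lemma poch_pos {a : ℝ} (ha : 0 < a) (k : ℕ) : 0 < poch a k :=
  prod_pos fun i _ => by positivity

lemma Gamma_add_nat_eq_mul_poch {p : ℝ} (hp : 0 < p) (n : ℕ) :
    Gamma (p + n) = Gamma p * poch p n := by
  induction n with
  | zero => simp [poch]
  | succ n ih =>
    rw [Nat.cast_succ, ← add_assoc, Gamma_add_one (by positivity), ih, poch_succ]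
    ring

lemma poch_neg_nat_mul_factorial {m j : ℕ} (h : j ≤ m) :
    poch (-(m : ℝ)) j * ((m - j).factorial : ℝ) = (-1) ^ j * (m.factorial : ℝ) := by
  induction j with
  | zero => simp [poch]
  | succ j ih =>
    have hfac : ((m - j).factorial : ℝ) = ((m : ℝ) - j) * ((m - (j + 1)).factorial : ℝ) := by
      rw [show m - j = m - (j + 1) + 1 by omega, Nat.factorial_succ, Nat.cast_mul,
        Nat.cast_succ, Nat.cast_sub h]
      push_cast
      ring
    have hne : (m : ℝ) - j ≠ 0 := sub_ne_zero.2 (by exact_mod_cast (Nat.lt_of_succ_le h).ne')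
    rw [hfac] at ih
    apply mul_right_cancel₀ hne
    rw [poch_succ]
    linear_combination (-((m : ℝ) - j)) * ih (by omega)

/-- The coefficient of `x^j` in `₁F₁(-n; c; x)`. -/
noncomputable def hypCoeff (n : ℕ) (c : ℝ) (j : ℕ) : ℝ :=
  poch (-(n : ℝ)) j / (poch c j * (j.factorial : ℝ))

lemma lauricellaA_eq_sum_hypCoeff {r : ℕ} (a : ℝ) (m : Fin r → ℕ) (c x : Fin r → ℝ) :
    lauricellaA a m c x = ∑ j ∈ Fintype.piFinset (fun i => range (m i + 1)),
      poch a (∑ i, j i) * ∏ i, (hypCoeff (m i) (c i) (j i) * x i ^ j i) :=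
  rfl

lemma neg_one_pow_div_factorial_mul_gbinom {α : ℝ} (hα : -1 < α) {n j : ℕ} (hj : j ≤ n) :
    (-1 : ℝ) ^ j / (j.factorial : ℝ) * gbinom ((n : ℝ) + α) (n - j) =
      gbinom ((n : ℝ) + α) n * hypCoeff n (α + 1) j := by
  have hpoch : poch (α + 1) n = poch (α + 1) j * poch (α + 1 + j) (n - j) := by
    rw [← poch_add, Nat.add_sub_cancel' hj]
  have hneg : poch (-(n : ℝ)) j = (-1) ^ j * (n.factorial : ℝ) / ((n - j).factorial : ℝ) := by
    rw [eq_div_iff (by positivity)]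
    exact poch_neg_nat_mul_factorial hj
  have hpos : 0 < poch (α + 1) j := poch_pos (by linarith) j
  unfold gbinom hypCoeff
  rw [Nat.cast_sub hj, show (n : ℝ) + α - (n - j) + 1 = α + 1 + j by ring,
    show (n : ℝ) + α - n + 1 = α + 1 by ring, hpoch, hneg]
  field_simp

lemma Lag_eq_gbinom_mul_sum {α : ℝ} (hα : -1 < α) (n : ℕ) (x : ℝ) :
    Lag α n x = gbinom ((n : ℝ) + α) n * ∑ j ∈ range (n + 1), hypCoeff n (α + 1) j * x ^ j := by
  rw [Lag, mul_sum]
  refine sum_congr rfl fun j hj => ?_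
  rw [neg_one_pow_div_factorial_mul_gbinom hα (Nat.lt_succ_iff.1 (mem_range.1 hj))]
  ring

lemma prod_Lag_eq_sum {ι : Type*} [Fintype ι] [DecidableEq ι] {α : ℝ} (hα : -1 < α)
    (m : ι → ℕ) (x : ℝ) :
    ∏ i, Lag α (m i) x = (∏ i, gbinom ((m i : ℝ) + α) (m i)) *
      ∑ j ∈ Fintype.piFinset (fun i => range (m i + 1)),
        (∏ i, hypCoeff (m i) (α + 1) (j i)) * x ^ (∑ i, j i) := by
  simp_rw [Lag_eq_gbinom_mul_sum hα, prod_mul_distrib, prod_univ_sum, ← prod_pow_eq_pow_sum,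
    ← prod_mul_distrib]

lemma integral_rpow_add_nat_mul_exp_neg_mul {q β : ℝ} (hq : -1 < q) (hβ : 0 < β) (n : ℕ) :
    ∫ x in Set.Ioi (0 : ℝ), x ^ (q + n) * exp (-β * x) =
      β ^ (-q - 1) * Gamma (q + 1) * poch (q + 1) n * (1 / β) ^ n := by
  have h := integral_rpow_mul_exp_neg_mul_Ioi (a := q + n + 1)
    (by linarith [(n.cast_nonneg : (0 : ℝ) ≤ n)]) hβ
  simp only [add_sub_cancel_right, ← neg_mul] at h
  have hpow : (1 / β) ^ (q + n + 1) = β ^ (-q - 1) * (1 / β) ^ n := by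
    rw [← rpow_natCast, one_div, inv_rpow hβ.le, inv_rpow hβ.le, ← rpow_neg hβ.le,
      ← rpow_neg hβ.le, ← rpow_add hβ]
    ring_nf
  rw [h, hpow, add_right_comm, Gamma_add_nat_eq_mul_poch (by linarith)]
  ring

lemma integrableOn_rpow_mul_exp_neg_mul {q β : ℝ} (hq : -1 < q) (hβ : 0 < β) :
    IntegrableOn (fun x => x ^ q * exp (-β * x)) (Set.Ioi (0 : ℝ)) := by
  simpa [rpow_one] using integrableOn_rpow_mul_exp_neg_mul_rpow hq one_pos hβ

lemma integral_rpow_mul_exp_neg_mul_mul_sum {κ : Type*} {q β : ℝ} (hq : -1 < q) (hβ : 0 < β)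
    (J : Finset κ) (c : κ → ℝ) (n : κ → ℕ) :
    ∫ x in Set.Ioi (0 : ℝ), x ^ q * exp (-β * x) * ∑ j ∈ J, c j * x ^ n j =
      β ^ (-q - 1) * Gamma (q + 1) * ∑ j ∈ J, c j * poch (q + 1) (n j) * (1 / β) ^ n j := by
  have hexpand : Set.EqOn (fun x => x ^ q * exp (-β * x) * ∑ j ∈ J, c j * x ^ n j)
      (fun x => ∑ j ∈ J, c j * (x ^ (q + n j) * exp (-β * x))) (Set.Ioi 0) := by
    intro x hx
    simp only [mul_sum, rpow_add (Set.mem_Ioi.1 hx), rpow_natCast]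
    exact sum_congr rfl fun j _ => by ring
  have hint : ∀ j ∈ J, Integrable (fun x => c j * (x ^ (q + n j) * exp (-β * x)))
      (volume.restrict (Set.Ioi 0)) := fun j _ =>
    (integrableOn_rpow_mul_exp_neg_mul (by linarith [(n j).cast_nonneg (α := ℝ)]) hβ).const_mul _
  rw [setIntegral_congr_fun measurableSet_Ioi hexpand, integral_finsetSum J hint, mul_sum]
  refine sum_congr rfl fun j _ => ?_
  rw [integral_const_mul, integral_rpow_add_nat_mul_exp_neg_mul hq hβ]
  ring

theorem laguerre_krein_r_functional_general (r : ℕ) (m : Fin r → ℕ) (α β s : ℝ)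
    (hα : -1 < α) (hβ : 0 < β) (hs : -1 < β * α + s) :
    ∫ x in Set.Ioi (0 : ℝ), x ^ (β * α + s) * Real.exp (-β * x) * ∏ i, Lag α (m i) x =
      β ^ (-(β * α) - s - 1) * Real.Gamma (β * α + s + 1) *
        (∏ i, gbinom ((m i : ℝ) + α) (m i)) *
        lauricellaA (β * α + s + 1) m (fun _ => α + 1) (fun _ => 1 / β) := by
  simp_rw [prod_Lag_eq_sum hα, mul_left_comm _ (∏ i, gbinom _ _)]
  rw [integral_const_mul, integral_rpow_mul_exp_neg_mul_mul_sum hs hβ, lauricellaA_eq_sum_hypCoeff,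
    show -(β * α) - s - 1 = -(β * α + s) - 1 by ring, mul_sum, mul_sum, mul_sum]
  refine sum_congr rfl fun j _ => ?_
  rw [prod_mul_distrib, prod_pow_eq_pow_sum]
  ring

/-- generalized Krein-like functional of Laguerre polynomials. -/
theorem laguerre_krein_r_functional (r : ℕ) (hr : 1 ≤ r) (m : Fin r → ℕ) (α β s : ℝ)
    (hα : -1 < α) (hβ : 0 < β) (hs : -1 < β * α + s) :
    ∫ x in Set.Ioi (0 : ℝ), x ^ (β * α + s) * Real.exp (-β * x) * ∏ i, Lag α (m i) x =
      β ^ (-(β * α) - s - 1) * Real.Gamma (β * α + s + 1) *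
        (∏ i, gbinom ((m i : ℝ) + α) (m i)) *
        lauricellaA (β * α + s + 1) m (fun _ => α + 1) (fun _ => 1 / β) :=
  laguerre_krein_r_functional_general r m α β s hα hβ hs
end

section
/- Let m, n, s be nonnegative integers with m + n + s even, and let β > 0. Then ∫_{-∞}^{∞} x^{s} e^{-βx²} H_m(x) H_n(x) dx = β^{-1/2} Σ_{j=0}^{⌊(m+s)/2⌋} c_{msj} Σ_{k=0}^{min(m+s−2j, n)} C(m+s−2j, k) C(n, k) · (2^{-2j−k+m+n+s} π k! / Γ((1+2(j+k)−(m+n)−s)/2)) · ((β−1)/β)^{(m+n+s−2(j+k))/2}, where c_{msj} = (2^{m−s} m! s! / (m+s−2j)!) Σ_{k=max(0, m−2j)}^{min(m+s−2j, m)} C(m+s−2j, k) / (2^k (m−k)! (k+j−m)!), with the convention that 1/Γ(z) = 0 when z is a nonpositive integer and 1/z! = 0 when z is a negative integer. -/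
open MeasureTheory Finset Real

/-!
Everything follows from the three-term recurrence `2x Hₙ = Hₙ₊₁ + 2n Hₙ₋₁`. Iterating it gives
the inversion formula `xˢ = ∑ᵢ s! / (2ˢ i! (s-2i)!) H_{s-2i}` and the linearization formula
`Hₐ H_b = ∑ₖ C(a,k) C(b,k) k! 2ᵏ H_{a+b-2k}`, so `xˢ Hₘ Hₙ` is an explicit combination of single
Hermite polynomials; the coefficient of `H_{m+s-2j}` in `xˢ Hₘ` is the paper's `c_{msj}`.
Since `m + n + s` is even, only even degrees occur, and expanding `H_{2t}` in monomials and summing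
the Gaussian moments by the binomial theorem gives `∫ H_{2t} e^{-βx²} = √(π/β) (2t)!/t! ((1-β)/β)ᵗ`.
The reflection formula `Γ(1/2 - t) = (-4)ᵗ t! √π / (2t)!` turns this into the Gamma-function form
of the statement.
-/

lemma Nat.cast_add_one_mul_choose_succ (n k : ℕ) :
    ((k : ℝ) + 1) * (n.choose (k + 1) : ℝ) = ((n : ℝ) - k) * (n.choose k : ℝ) := by
  rcases le_or_gt k n with hkn | hnk
  · have h := Nat.choose_succ_right_eq n k
    rw [← Nat.cast_sub hkn]
    exact_mod_cast (mul_comm _ _).trans (h.trans (mul_comm _ _))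
  · simp [Nat.choose_eq_zero_of_lt hnk, Nat.choose_eq_zero_of_lt (Nat.lt_succ_of_lt hnk)]

lemma Finset.sum_range_shift_of_eq_zero {M : Type*} [AddCommMonoid M] (f : ℕ → M) (n : ℕ)
    (h₀ : f 0 = 0) (hn : f n = 0) : ∑ k ∈ range n, f (k + 1) = ∑ k ∈ range n, f k := by
  have h := sum_range_succ' f n
  rw [sum_range_succ, hn, h₀, add_zero, add_zero] at h
  exact h.symm

lemma Finset.sum_range_sum_range_eq_sum_diag {M : Type*} [AddCommMonoid M] (f : ℕ → ℕ → M)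
    (A B : ℕ) (hA : ∀ i k, A ≤ i → f i k = 0) (hB : ∀ i k, B ≤ k → f i k = 0) :
    ∑ i ∈ range A, ∑ k ∈ range B, f i k =
      ∑ j ∈ range (A + B), ∑ i ∈ range (j + 1), f i (j - i) := by
  rw [sum_range_diag_flip, ← sum_subset (range_subset_range.2 (Nat.le_add_right A B))
    fun i _ hi => sum_eq_zero fun k _ => hA i k (by simpa using hi)]
  refine sum_congr rfl fun i hi => sum_subset (range_subset_range.2 ?_) fun k _ hk => hB i k ?_
  · simp only [mem_range] at hi; omega
  · simpa using hk

lemma Herm_zero (x : ℝ) : Herm 0 x = 1 := by simp [Herm]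

lemma Herm_one (x : ℝ) : Herm 1 x = 2 * x := by simp [Herm]

noncomputable def hermCoeff (n k : ℕ) : ℝ :=
  (-1) ^ k * (n.choose (2 * k) : ℝ) * ((2 * k).factorial : ℝ) / (k.factorial : ℝ)

lemma hermCoeff_zero_right (n : ℕ) : hermCoeff n 0 = 1 := by simp [hermCoeff]

lemma hermCoeff_eq_zero_of_lt {n k : ℕ} (h : n < 2 * k) : hermCoeff n k = 0 := by
  simp [hermCoeff, Nat.choose_eq_zero_of_lt h]

lemma hermCoeff_add_two_succ (n k : ℕ) :
    hermCoeff (n + 2) (k + 1) =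
      hermCoeff (n + 1) (k + 1) - 2 * ((n : ℝ) + 1) * hermCoeff n k := by
  have pascal := Nat.choose_succ_succ' (n + 1) (2 * k + 1)
  have absorb : ((n : ℝ) + 1) * (n.choose (2 * k) : ℝ) =
      ((n + 1).choose (2 * k + 1) : ℝ) * (2 * k + 1) := by
    exact_mod_cast Nat.add_one_mul_choose_eq n (2 * k)
  simp only [hermCoeff, show 2 * (k + 1) = 2 * k + 1 + 1 by ring, Nat.factorial_succ]
  rw [pascal]
  push_cast
  field_simp
  linear_combination 2 * ((k : ℝ) + 1) * (-1 : ℝ) ^ k * absorb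

lemma Herm_eq_sum_hermCoeff {n K : ℕ} (hK : n / 2 < K) (x : ℝ) :
    Herm n x = ∑ k ∈ range K, hermCoeff n k * (2 * x) ^ (n - 2 * k) := by
  rw [Herm, ← sum_subset (range_subset_range.2 hK)
    fun k _ hk => by rw [hermCoeff_eq_zero_of_lt (by simp only [mem_range] at hk; omega), zero_mul]]
  refine sum_congr rfl fun k hk => ?_
  have h2k : 2 * k ≤ n := by simp only [mem_range] at hk; omega
  rw [hermCoeff, Nat.cast_choose ℝ h2k]
  field_simp

lemma mul_hermCoeff_mul_pow (n k : ℕ) (y : ℝ) :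
    y * (hermCoeff n k * y ^ (n - 2 * k)) = hermCoeff n k * y ^ (n + 1 - 2 * k) := by
  rcases le_or_gt (2 * k) n with h | h
  · rw [show n + 1 - 2 * k = n - 2 * k + 1 by omega, pow_succ]; ring
  · rw [hermCoeff_eq_zero_of_lt h]; ring

lemma Herm_add_two (n : ℕ) (x : ℝ) :
    Herm (n + 2) x = 2 * x * Herm (n + 1) x - 2 * ((n : ℝ) + 1) * Herm n x := by
  have peel : ∀ N, ∑ k ∈ range (n + 3), hermCoeff N k * (2 * x) ^ (n + 2 - 2 * k) =
      (2 * x) ^ (n + 2) + ∑ k ∈ range (n + 2), hermCoeff N (k + 1) * (2 * x) ^ (n - 2 * k) := by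
    intro N
    rw [sum_range_succ', hermCoeff_zero_right, add_comm]
    simp only [show ∀ k, n + 2 - 2 * (k + 1) = n - 2 * k by omega, mul_zero, Nat.sub_zero,
      one_mul]
  rw [Herm_eq_sum_hermCoeff (K := n + 3) (by omega), Herm_eq_sum_hermCoeff (K := n + 3) (by omega),
    Herm_eq_sum_hermCoeff (K := n + 2) (by omega), mul_sum (a := 2 * x)]
  simp only [mul_hermCoeff_mul_pow, show n + 1 + 1 = n + 2 by ring]
  rw [peel, peel, mul_sum, add_sub_assoc, ← sum_sub_distrib]
  congr 1
  refine sum_congr rfl fun k _ => ?_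
  rw [hermCoeff_add_two_succ]
  ring

lemma two_mul_mul_Herm (n : ℕ) (x : ℝ) :
    2 * x * Herm n x = Herm (n + 1) x + 2 * n * Herm (n - 1) x := by
  cases n with
  | zero => simp [Herm_zero, Herm_one]
  | succ n =>
    rw [Herm_add_two, Nat.add_sub_cancel]
    push_cast
    ring

lemma two_mul_sum_mul_Herm (N K : ℕ) (c : ℕ → ℝ) (hc : ∀ k, N < 2 * k → c k = 0)
    (x : ℝ) :
    2 * x * ∑ k ∈ range K, c k * Herm (N - 2 * k) x =
      ∑ k ∈ range K, c k * Herm (N + 1 - 2 * k) x +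
        ∑ k ∈ range K, 2 * ((N : ℝ) - 2 * k) * c k * Herm (N + 1 - 2 * (k + 1)) x := by
  rw [mul_sum, ← sum_add_distrib]
  refine sum_congr rfl fun k _ => ?_
  rcases le_or_gt (2 * k) N with h | h
  · have h2 := two_mul_mul_Herm (N - 2 * k) x
    rw [show N - 2 * k + 1 = N + 1 - 2 * k by omega,
      show N - 2 * k - 1 = N + 1 - 2 * (k + 1) by omega, Nat.cast_sub h] at h2
    push_cast at h2
    linear_combination c k * h2
  · rw [hc k h]; ring

noncomputable def hermLinCoeff (a b k : ℕ) : ℝ :=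
  (a.choose k : ℝ) * (b.choose k : ℝ) * (k.factorial : ℝ) * 2 ^ k

lemma hermLinCoeff_zero_right (a b : ℕ) : hermLinCoeff a b 0 = 1 := by simp [hermLinCoeff]

lemma hermLinCoeff_eq_zero_of_lt_left {a b k : ℕ} (h : a < k) : hermLinCoeff a b k = 0 := by
  simp [hermLinCoeff, Nat.choose_eq_zero_of_lt h]

lemma hermLinCoeff_eq_zero_of_lt_right {a b k : ℕ} (h : b < k) : hermLinCoeff a b k = 0 := by
  simp [hermLinCoeff, Nat.choose_eq_zero_of_lt h]

lemma hermLinCoeff_add_two_succ (a b k : ℕ) :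
    hermLinCoeff (a + 2) b (k + 1) = hermLinCoeff (a + 1) b (k + 1) +
      2 * ((a : ℝ) + 1 + b - 2 * k) * hermLinCoeff (a + 1) b k -
        2 * ((a : ℝ) + 1) * hermLinCoeff a b k := by
  have pascal := Nat.choose_succ_succ' (a + 1) k
  have absorb :
      ((a : ℝ) + 1) * (a.choose k : ℝ) = ((a + 1).choose (k + 1) : ℝ) * (k + 1) := by
    exact_mod_cast Nat.add_one_mul_choose_eq a k
  have hb := Nat.cast_add_one_mul_choose_succ b k
  have ha := Nat.cast_add_one_mul_choose_succ (a + 1) k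
  simp only [hermLinCoeff, Nat.factorial_succ, pow_succ]
  rw [pascal]
  push_cast at ha ⊢
  linear_combination (2 * (k.factorial : ℝ) * 2 ^ k) *
    (((a + 1).choose k : ℝ) * hb + (b.choose k : ℝ) * ha + (b.choose k : ℝ) * absorb)

theorem Herm_mul_Herm (a b : ℕ) (x : ℝ) :
    Herm a x * Herm b x =
      ∑ k ∈ range (b + 1), hermLinCoeff a b k * Herm (a + b - 2 * k) x := by
  induction a using Nat.twoStepInduction with
  | zero =>
    rw [sum_range_succ', sum_eq_zero fun k _ => by rw [hermLinCoeff_eq_zero_of_lt_left (by omega),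
      zero_mul]]
    simp [hermLinCoeff_zero_right, Herm_zero]
  | one =>
    rcases b with _ | b
    · simp [hermLinCoeff_zero_right, Herm_zero, Herm_one]
    · have h := two_mul_mul_Herm (b + 1) x
      have h₁ : hermLinCoeff 1 (b + 1) 1 = 2 * ((b : ℝ) + 1) := by simp [hermLinCoeff]; ring
      rw [sum_range_succ', sum_range_succ', sum_eq_zero fun k _ => by
          rw [hermLinCoeff_eq_zero_of_lt_left (by omega), zero_mul],
        show 1 + (b + 1) - 2 * (0 + 1) = b by omega, show 1 + (b + 1) - 2 * 0 = b + 1 + 1 by omega,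
        zero_add, h₁, hermLinCoeff_zero_right, Herm_one]
      rw [Nat.add_sub_cancel, Nat.cast_succ] at h
      linear_combination h
  | more a iha iha1 =>
    have shift := sum_range_shift_of_eq_zero
      (fun k => (hermLinCoeff (a + 2) b k - hermLinCoeff (a + 1) b k) * Herm (a + 2 + b - 2 * k) x)
      (b + 1) (by simp [hermLinCoeff_zero_right])
      (by simp [hermLinCoeff_eq_zero_of_lt_right (Nat.lt_succ_self b)])
    have expand := two_mul_sum_mul_Herm (a + 1 + b) (b + 1) (hermLinCoeff (a + 1) b)
      (fun k hk => by
        rcases le_or_gt k (a + 1) with h | h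
        · exact hermLinCoeff_eq_zero_of_lt_right (by omega)
        · exact hermLinCoeff_eq_zero_of_lt_left h) x
    calc Herm (a + 2) x * Herm b x
        = 2 * x * (Herm (a + 1) x * Herm b x) - 2 * ((a : ℝ) + 1) * (Herm a x * Herm b x) := by
          rw [Herm_add_two]; ring
      _ = ∑ k ∈ range (b + 1), hermLinCoeff (a + 1) b k * Herm (a + 2 + b - 2 * k) x +
            ∑ k ∈ range (b + 1),
              (hermLinCoeff (a + 2) b (k + 1) - hermLinCoeff (a + 1) b (k + 1)) *
                Herm (a + 2 + b - 2 * (k + 1)) x := by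
          rw [iha, iha1, expand, mul_sum, add_sub_assoc, ← sum_sub_distrib]
          simp only [show a + 1 + b + 1 = a + 2 + b by ring, hermLinCoeff_add_two_succ]
          congr 1
          refine sum_congr rfl fun k _ => ?_
          rw [show a + b - 2 * k = a + 2 + b - 2 * (k + 1) by omega]
          push_cast
          ring
      _ = ∑ k ∈ range (b + 1), hermLinCoeff (a + 2) b k * Herm (a + 2 + b - 2 * k) x := by
          rw [shift, ← sum_add_distrib]
          exact sum_congr rfl fun k _ => by ring

noncomputable def powHermCoeff (s i : ℕ) : ℝ :=
  (s.choose (2 * i) : ℝ) * ((2 * i).factorial : ℝ) / (2 ^ s * (i.factorial : ℝ))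

lemma powHermCoeff_zero_right (s : ℕ) : powHermCoeff s 0 = (2 ^ s)⁻¹ := by simp [powHermCoeff]

lemma powHermCoeff_eq_zero_of_lt {s i : ℕ} (h : s < 2 * i) : powHermCoeff s i = 0 := by
  simp [powHermCoeff, Nat.choose_eq_zero_of_lt h]

lemma powHermCoeff_succ_succ (s i : ℕ) :
    powHermCoeff (s + 1) (i + 1) =
      powHermCoeff s (i + 1) / 2 + ((s : ℝ) - 2 * i) * powHermCoeff s i := by
  have pascal := Nat.choose_succ_succ' s (2 * i + 1)
  have hs := Nat.cast_add_one_mul_choose_succ s (2 * i)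
  simp only [powHermCoeff, show 2 * (i + 1) = 2 * i + 1 + 1 by ring, Nat.factorial_succ, pow_succ]
  rw [pascal]
  push_cast at hs ⊢
  field_simp
  linear_combination (2 * (i : ℝ) + 2) * hs

theorem pow_eq_sum_Herm (s : ℕ) (x : ℝ) :
    x ^ s = ∑ i ∈ range (s + 1), powHermCoeff s i * Herm (s - 2 * i) x := by
  induction s with
  | zero => simp [powHermCoeff_zero_right, Herm_zero]
  | succ s ih =>
    have shift := sum_range_shift_of_eq_zero
      (fun i => (powHermCoeff (s + 1) i - powHermCoeff s i / 2) * Herm (s + 1 - 2 * i) x) (s + 1)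
      (by simp only [powHermCoeff_zero_right, pow_succ]; ring)
      (by simp [powHermCoeff_eq_zero_of_lt (show s + 1 < 2 * (s + 1) by omega),
        powHermCoeff_eq_zero_of_lt (show s < 2 * (s + 1) by omega)])
    have expand := two_mul_sum_mul_Herm s (s + 1) (powHermCoeff s)
      (fun i hi => powHermCoeff_eq_zero_of_lt hi) x
    rw [sum_range_succ, powHermCoeff_eq_zero_of_lt (show s + 1 < 2 * (s + 1) by omega), zero_mul,
      add_zero]
    calc x ^ (s + 1) = (2 * x * x ^ s) / 2 := by ring
      _ = ∑ i ∈ range (s + 1), powHermCoeff s i / 2 * Herm (s + 1 - 2 * i) x +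
            ∑ i ∈ range (s + 1), (powHermCoeff (s + 1) (i + 1) - powHermCoeff s (i + 1) / 2) *
              Herm (s + 1 - 2 * (i + 1)) x := by
          rw [ih, expand, add_div, sum_div, sum_div]
          congr 1 <;> refine sum_congr rfl fun i _ => ?_
          · ring
          · rw [powHermCoeff_succ_succ]; ring
      _ = ∑ i ∈ range (s + 1), powHermCoeff (s + 1) i * Herm (s + 1 - 2 * i) x := by
          rw [shift, ← sum_add_distrib]
          exact sum_congr rfl fun i _ => by ring

noncomputable def powMulHermCoeff (m s j : ℕ) : ℝ :=
  ∑ i ∈ range (j + 1), powHermCoeff s i * hermLinCoeff (s - 2 * i) m (j - i)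

lemma powMulHermCoeff_eq_zero_of_lt {m s j : ℕ} (h : m + s < 2 * j) :
    powMulHermCoeff m s j = 0 := by
  refine sum_eq_zero fun i _ => ?_
  rcases lt_or_ge s (2 * i) with hs | hs
  · rw [powHermCoeff_eq_zero_of_lt hs, zero_mul]
  rcases lt_or_ge m (j - i) with hm | hm
  · rw [hermLinCoeff_eq_zero_of_lt_right hm, mul_zero]
  · rw [hermLinCoeff_eq_zero_of_lt_left (by omega), mul_zero]

theorem pow_mul_Herm (m s : ℕ) (x : ℝ) :
    x ^ s * Herm m x =
      ∑ j ∈ range ((m + s) / 2 + 1), powMulHermCoeff m s j * Herm (m + s - 2 * j) x := by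
  set f : ℕ → ℕ → ℝ := fun i k =>
    powHermCoeff s i * hermLinCoeff (s - 2 * i) m k * Herm (m + s - 2 * (i + k)) x
  calc x ^ s * Herm m x = ∑ i ∈ range (s + 1), ∑ k ∈ range (m + 1), f i k := by
        rw [pow_eq_sum_Herm, sum_mul]
        refine sum_congr rfl fun i _ => ?_
        rw [mul_assoc, Herm_mul_Herm, mul_sum]
        refine sum_congr rfl fun k _ => ?_
        rcases le_or_gt (2 * i) s with hi | hi
        · simp only [f, show s - 2 * i + m - 2 * k = m + s - 2 * (i + k) by omega]; ring
        · simp [f, powHermCoeff_eq_zero_of_lt hi]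
    _ = ∑ j ∈ range (s + 1 + (m + 1)), ∑ i ∈ range (j + 1), f i (j - i) :=
        sum_range_sum_range_eq_sum_diag f _ _
          (fun i k hi => by simp [f, powHermCoeff_eq_zero_of_lt (show s < 2 * i by omega)])
          (fun i k hk => by simp [f, hermLinCoeff_eq_zero_of_lt_right (show m < k by omega)])
    _ = ∑ j ∈ range (s + 1 + (m + 1)), powMulHermCoeff m s j * Herm (m + s - 2 * j) x := by
        refine sum_congr rfl fun j _ => ?_
        rw [powMulHermCoeff, sum_mul]
        refine sum_congr rfl fun i hi => ?_
        simp only [f, show i + (j - i) = j by simp only [mem_range] at hi; omega]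
    _ = _ := by
        refine (sum_subset (range_subset_range.2 (by omega)) fun j _ hj => ?_).symm
        rw [powMulHermCoeff_eq_zero_of_lt (by simp only [mem_range] at hj; omega), zero_mul]

lemma powHermCoeff_mul_hermLinCoeff_eq (i r d k : ℕ) :
    powHermCoeff (2 * i + r + d) i * hermLinCoeff (r + d) (k + r) r =
      (2 : ℝ) ^ (((k + r : ℕ) : ℝ) - ((2 * i + r + d : ℕ) : ℝ)) *
          ((k + r).factorial : ℝ) * ((2 * i + r + d).factorial : ℝ) /
            ((k + d).factorial : ℝ) *
        (((k + d).choose k : ℝ) *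
          (((2 : ℝ) ^ k * (r.factorial : ℝ))⁻¹ * (i.factorial : ℝ)⁻¹)) := by
  rw [Real.rpow_sub two_pos, Real.rpow_natCast, Real.rpow_natCast, powHermCoeff, hermLinCoeff,
    Nat.cast_choose ℝ (show 2 * i ≤ 2 * i + r + d by omega),
    Nat.cast_choose ℝ (Nat.le_add_right r d), Nat.cast_choose ℝ (Nat.le_add_left r k),
    Nat.cast_choose ℝ (Nat.le_add_right k d),
    show 2 * i + r + d - 2 * i = r + d by omega, Nat.add_sub_cancel_left, Nat.add_sub_cancel,
    Nat.add_sub_cancel_left]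
  field_simp
  ring

lemma invFacZ_of_neg {z : ℤ} (hz : z < 0) : invFacZ z = 0 := if_neg (not_le.2 hz)

lemma invFacZ_natCast (n : ℕ) : invFacZ n = (n.factorial : ℝ)⁻¹ := by simp [invFacZ]

lemma powHermCoeff_mul_hermLinCoeff_eq_of_le {m s j k : ℕ} (hj : 2 * j ≤ m + s)
    (hjk : m ≤ k + j) (hkm : k ≤ m) :
    powHermCoeff s (k + j - m) * hermLinCoeff (s - 2 * (k + j - m)) m (j - (k + j - m)) =
      (2 : ℝ) ^ ((m : ℝ) - (s : ℝ)) * (m.factorial : ℝ) * (s.factorial : ℝ) /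
          ((m + s - 2 * j).factorial : ℝ) *
        (((m + s - 2 * j).choose k : ℝ) *
          (((2 : ℝ) ^ k * ((m - k).factorial : ℝ))⁻¹ * invFacZ ((k : ℤ) + j - m))) := by
  obtain ⟨r, rfl⟩ := Nat.exists_eq_add_of_le hkm
  obtain ⟨i, rfl⟩ : ∃ i, j = i + r := ⟨j - r, by omega⟩
  rw [show k + (i + r) - (k + r) = i by omega, show i + r - i = r by omega,
    show k + r - k = r by omega]
  rcases lt_or_ge s (2 * i + r) with hs | hs
  · rw [Nat.choose_eq_zero_of_lt (show k + r + s - 2 * (i + r) < k by omega)]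
    rcases lt_or_ge s (2 * i) with hs' | hs'
    · simp [powHermCoeff_eq_zero_of_lt hs']
    · simp [hermLinCoeff_eq_zero_of_lt_left (show s - 2 * i < r by omega)]
  obtain ⟨d, rfl⟩ := Nat.exists_eq_add_of_le hs
  rw [show k + r + (2 * i + r + d) - 2 * (i + r) = k + d by omega,
    show ((k : ℤ) + ↑(i + r) - ↑(k + r)) = ((i : ℕ) : ℤ) by push_cast; ring, invFacZ_natCast,
    show 2 * i + r + d - 2 * i = r + d by omega, powHermCoeff_mul_hermLinCoeff_eq]

lemma powMulHermCoeff_eq (m s j : ℕ) (hj : 2 * j ≤ m + s) :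
    (2 : ℝ) ^ ((m : ℝ) - (s : ℝ)) * (m.factorial : ℝ) * (s.factorial : ℝ) /
          ((m + s - 2 * j).factorial : ℝ) *
        ∑ k ∈ Icc (m - 2 * j) (min (m + s - 2 * j) m),
          ((m + s - 2 * j).choose k : ℝ) *
            (((2 : ℝ) ^ k * ((m - k).factorial : ℝ))⁻¹ * invFacZ ((k : ℤ) + j - m)) =
      powMulHermCoeff m s j := by
  set T : ℕ → ℝ := fun k => (2 : ℝ) ^ ((m : ℝ) - (s : ℝ)) * (m.factorial : ℝ) *
    (s.factorial : ℝ) / ((m + s - 2 * j).factorial : ℝ) * (((m + s - 2 * j).choose k : ℝ) *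
      (((2 : ℝ) ^ k * ((m - k).factorial : ℝ))⁻¹ * invFacZ ((k : ℤ) + j - m)))
  have T_lo : ∀ k, k + j < m → T k = 0 := fun k hk => by
    simp [T, invFacZ_of_neg (show (k : ℤ) + j - m < 0 by omega)]
  have T_hi : ∀ k, m + s - 2 * j < k → T k = 0 := fun k hk => by
    simp [T, Nat.choose_eq_zero_of_lt hk]
  have hsub₁ : Icc (m - 2 * j) (min (m + s - 2 * j) m) ⊆ range (m + 1) := fun k hk => by
    simp only [mem_range, mem_Icc] at hk ⊢; omega
  have hsub₂ : Icc (m - j) m ⊆ range (m + 1) := fun k hk => by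
    simp only [mem_range, mem_Icc] at hk ⊢; omega
  have hsub₃ : Icc (j - m) j ⊆ range (j + 1) := fun i hi => by
    simp only [mem_range, mem_Icc] at hi ⊢; omega
  rw [mul_sum, sum_subset hsub₁ fun k hk hk' => by
      simp only [mem_range] at hk
      simp only [mem_Icc, le_min_iff, not_and_or, not_le] at hk'
      rcases hk' with h | h | h
      · exact T_lo k (by omega)
      · exact T_hi k h
      · omega,
    ← sum_subset hsub₂ fun k hk hk' =>
      T_lo k (by simp only [mem_range, mem_Icc] at hk hk'; omega),
    powMulHermCoeff, ← sum_subset hsub₃ fun i hi hi' => by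
      simp only [mem_range, mem_Icc] at hi hi'
      rw [hermLinCoeff_eq_zero_of_lt_right (show m < j - i by omega), mul_zero]]
  refine sum_nbij' (fun k => k + j - m) (fun i => i + m - j)
    (fun k hk => by simp only [mem_Icc] at hk ⊢; omega)
    (fun i hi => by simp only [mem_Icc] at hi ⊢; omega)
    (fun k hk => by simp only [mem_Icc] at hk; omega)
    (fun i hi => by simp only [mem_Icc] at hi; omega) fun k hk => ?_
  simp only [mem_Icc] at hk
  exact (powHermCoeff_mul_hermLinCoeff_eq_of_le hj (by omega) hk.2).symm

lemma Real.Gamma_nat_add_half_eq_factorial (t : ℕ) :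
    Gamma (t + 1 / 2) = ((2 * t).factorial : ℝ) * √π / (4 ^ t * (t.factorial : ℝ)) := by
  have h : (2 * t).factorial = 2 ^ t * t.factorial * (2 * t - 1).doubleFactorial := by
    rcases t with _ | u
    · rfl
    · rw [show 2 * (u + 1) = 2 * u + 1 + 1 by ring, Nat.factorial_eq_mul_doubleFactorial,
        show 2 * u + 1 + 1 = 2 * (u + 1) by ring, Nat.doubleFactorial_two_mul]
      rfl
  rw [Real.Gamma_nat_add_half, h,
    show (4 : ℝ) ^ t = 2 ^ t * 2 ^ t by rw [← mul_pow]; norm_num]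
  push_cast
  field_simp

lemma Real.Gamma_half_sub_nat_mul_Gamma_nat_add_half (t : ℕ) :
    Gamma (1 / 2 - t) * Gamma (t + 1 / 2) = (-1) ^ t * π := by
  have h := Real.Gamma_mul_Gamma_one_sub (t + 1 / 2)
  rw [show π * (t + 1 / 2) = t * π + π / 2 by ring, Real.sin_add_pi_div_two, Real.cos_nat_mul_pi,
    show (1 : ℝ) - (t + 1 / 2) = 1 / 2 - t by ring] at h
  rw [mul_comm, h, div_eq_mul_inv, ← inv_pow, inv_neg, inv_one, mul_comm]

lemma Real.Gamma_half_sub_nat (t : ℕ) :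
    Gamma (1 / 2 - t) = (-4) ^ t * (t.factorial : ℝ) * √π / ((2 * t).factorial : ℝ) := by
  have h := Real.Gamma_half_sub_nat_mul_Gamma_nat_add_half t
  rw [Real.Gamma_nat_add_half_eq_factorial] at h
  have hπ : √π * √π = π := Real.mul_self_sqrt pi_pos.le
  rw [neg_pow]
  field_simp at h ⊢
  apply mul_right_cancel₀ (Real.sqrt_pos.2 pi_pos).ne'
  linear_combination h - (t.factorial : ℝ) * (-1) ^ t * 4 ^ t * hπ

section Gaussian

variable {β : ℝ}

lemma integrable_pow_mul_exp_neg_mul_sq (hβ : 0 < β) (n : ℕ) :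
    Integrable fun x : ℝ => x ^ n * exp (-β * x ^ 2) := by
  simpa [Real.rpow_natCast] using
    integrable_rpow_mul_exp_neg_mul_sq hβ
      (show (-1 : ℝ) < n by linarith [n.cast_nonneg (α := ℝ)])

lemma integral_pow_two_mul_mul_exp_neg_mul_sq (hβ : 0 < β) (t : ℕ) :
    ∫ x : ℝ, x ^ (2 * t) * exp (-β * x ^ 2) = Gamma (t + 1 / 2) / (β ^ t * √β) := by
  have heven : (fun x : ℝ => x ^ (2 * t) * exp (-β * x ^ 2)) =
      fun x => |x| ^ (2 * t) * exp (-β * |x| ^ 2) := by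
    funext x
    rw [pow_mul, pow_mul, sq_abs]
  have half := integral_rpow_mul_exp_neg_mul_rpow two_pos
    (show (-1 : ℝ) < (2 * t : ℕ) by linarith [(2 * t).cast_nonneg (α := ℝ)]) hβ
  simp only [Real.rpow_natCast, Real.rpow_two] at half
  rw [heven, integral_comp_abs (f := fun x => x ^ (2 * t) * exp (-β * x ^ 2)), half,
    show -(((2 * t : ℕ) : ℝ) + 1) / 2 = -(t : ℝ) + -(1 / 2) by push_cast; ring,
    show (((2 * t : ℕ) : ℝ) + 1) / 2 = t + 1 / 2 by push_cast; ring,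
    Real.rpow_add hβ, Real.rpow_neg hβ.le, Real.rpow_neg hβ.le, Real.rpow_natCast,
    ← Real.sqrt_eq_rpow]
  field_simp

lemma integrable_Herm_mul_exp_neg_mul_sq (hβ : 0 < β) (q : ℕ) :
    Integrable fun x : ℝ => Herm q x * exp (-β * x ^ 2) := by
  simp only [Herm, sum_mul]
  refine integrable_finsetSum _ fun k _ => ?_
  refine ((integrable_pow_mul_exp_neg_mul_sq hβ (q - 2 * k)).const_mul
    ((-1 : ℝ) ^ k * (q.factorial : ℝ) / ((k.factorial : ℝ) * ((q - 2 * k).factorial : ℝ)) *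
      2 ^ (q - 2 * k))).congr (ae_of_all _ fun x => ?_)
  simp only [mul_pow]
  ring

lemma integral_Herm_two_mul_mul_exp_neg_mul_sq (hβ : 0 < β) (t : ℕ) :
    ∫ x : ℝ, Herm (2 * t) x * exp (-β * x ^ 2) =
      √π / √β * (((2 * t).factorial : ℝ) / (t.factorial : ℝ)) * ((1 - β) / β) ^ t := by
  have hexp : (fun x : ℝ => Herm (2 * t) x * exp (-β * x ^ 2)) = fun x =>
      ∑ k ∈ range (t + 1), (-1 : ℝ) ^ k * ((2 * t).factorial : ℝ) /
        ((k.factorial : ℝ) * ((2 * (t - k)).factorial : ℝ)) * 4 ^ (t - k) *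
          (x ^ (2 * (t - k)) * exp (-β * x ^ 2)) := by
    funext x
    rw [Herm, show 2 * t / 2 = t by omega, sum_mul]
    refine sum_congr rfl fun k _ => ?_
    rw [show 2 * t - 2 * k = 2 * (t - k) by omega, pow_mul, mul_pow, pow_mul]
    norm_num
    ring
  rw [hexp, integral_finsetSum _ fun k _ => (integrable_pow_mul_exp_neg_mul_sq hβ _).const_mul _]
  simp_rw [integral_const_mul, integral_pow_two_mul_mul_exp_neg_mul_sq hβ,
    Real.Gamma_nat_add_half_eq_factorial]
  rw [div_pow, show 1 - β = -β + 1 by ring, add_pow, sum_div, mul_sum]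
  refine sum_congr rfl fun k hk => ?_
  obtain ⟨u, rfl⟩ := Nat.exists_eq_add_of_le (Nat.lt_succ_iff.1 (mem_range.1 hk))
  rw [Nat.add_sub_cancel_left, Nat.cast_choose ℝ (Nat.le_add_right k u), Nat.add_sub_cancel_left,
    one_pow, neg_pow]
  field_simp
  ring


lemma integral_pow_mul_exp_mul_Herm_mul_Herm (hβ : 0 < β) (m n s : ℕ) :
    ∫ x : ℝ, x ^ s * exp (-β * x ^ 2) * Herm m x * Herm n x =
      ∑ j ∈ range ((m + s) / 2 + 1), powMulHermCoeff m s j *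
        ∑ k ∈ range (n + 1), hermLinCoeff (m + s - 2 * j) n k *
          ∫ x : ℝ, Herm (m + s - 2 * j + n - 2 * k) x * exp (-β * x ^ 2) := by
  have hexpand : (fun x : ℝ => x ^ s * exp (-β * x ^ 2) * Herm m x * Herm n x) = fun x =>
      ∑ j ∈ range ((m + s) / 2 + 1), ∑ k ∈ range (n + 1),
        powMulHermCoeff m s j * hermLinCoeff (m + s - 2 * j) n k *
          (Herm (m + s - 2 * j + n - 2 * k) x * exp (-β * x ^ 2)) := by
    funext x
    calc x ^ s * exp (-β * x ^ 2) * Herm m x * Herm n x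
        = x ^ s * Herm m x * Herm n x * exp (-β * x ^ 2) := by ring
      _ = ∑ j ∈ range ((m + s) / 2 + 1),
            powMulHermCoeff m s j * (Herm (m + s - 2 * j) x * Herm n x) * exp (-β * x ^ 2) := by
          rw [pow_mul_Herm, sum_mul, sum_mul]
          exact sum_congr rfl fun j _ => by ring
      _ = _ := by
          refine sum_congr rfl fun j _ => ?_
          rw [Herm_mul_Herm, mul_sum, sum_mul]
          exact sum_congr rfl fun k _ => by ring
  have hint := integrable_Herm_mul_exp_neg_mul_sq hβ
  rw [hexpand,
    integral_finsetSum _ fun j _ => integrable_finsetSum _ fun k _ => (hint _).const_mul _]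
  refine sum_congr rfl fun j _ => ?_
  rw [integral_finsetSum _ fun k _ => (hint _).const_mul _, mul_sum]
  exact sum_congr rfl fun k _ => by rw [integral_const_mul, mul_assoc]

lemma hermLinCoeff_mul_integral_Herm_two_mul (hβ : 0 < β) (p n k t : ℕ) :
    hermLinCoeff p n k * ∫ x : ℝ, Herm (2 * t) x * exp (-β * x ^ 2) =
      (√β)⁻¹ * ((p.choose k : ℝ) * (n.choose k : ℝ) *
        ((2 : ℝ) ^ (2 * t + k) * π * (k.factorial : ℝ) / Gamma (1 / 2 - t)) *
          ((β - 1) / β) ^ t) := by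
  rw [integral_Herm_two_mul_mul_exp_neg_mul_sq hβ, hermLinCoeff, Real.Gamma_half_sub_nat,
    neg_pow (4 : ℝ), pow_add, pow_mul, show (2 : ℝ) ^ 2 = 4 by norm_num,
    show (β - 1) / β = -((1 - β) / β) by ring, neg_pow ((1 - β) / β)]
  generalize ((1 - β) / β) ^ t = X
  have hπ : √π * √π = π := Real.mul_self_sqrt pi_pos.le
  field_simp
  linear_combination (p.choose k : ℝ) * (n.choose k : ℝ) * X * hπ

lemma hermLinCoeff_mul_integral_Herm_eq (hβ : 0 < β) {m n s j k : ℕ}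
    (hpar : Even (m + n + s)) (hj : 2 * j ≤ m + s) (hk : k ≤ min (m + s - 2 * j) n) :
    hermLinCoeff (m + s - 2 * j) n k *
        ∫ x : ℝ, Herm (m + s - 2 * j + n - 2 * k) x * exp (-β * x ^ 2) =
      (√β)⁻¹ * (((m + s - 2 * j).choose k : ℝ) * (n.choose k : ℝ) *
        ((2 : ℝ) ^ (-(2 : ℝ) * j - (k : ℝ) + (m : ℝ) + (n : ℝ) + (s : ℝ)) * π *
            (k.factorial : ℝ) /
          Gamma ((1 + 2 * ((j : ℝ) + (k : ℝ)) - ((m : ℝ) + (n : ℝ)) - (s : ℝ)) / 2)) *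
        ((β - 1) / β) ^ ((m + n + s - 2 * (j + k)) / 2)) := by
  obtain ⟨t, ht⟩ : ∃ t, m + n + s = 2 * j + 2 * k + 2 * t := by
    obtain ⟨w, hw⟩ := hpar
    exact ⟨w - j - k, by omega⟩
  have htR : (m : ℝ) + n + s = 2 * j + 2 * k + 2 * t := by exact_mod_cast ht
  rw [show m + s - 2 * j + n - 2 * k = 2 * t by omega,
    show (m + n + s - 2 * (j + k)) / 2 = t by omega,
    show -(2 : ℝ) * j - k + m + n + s = ((2 * t + k : ℕ) : ℝ) by push_cast; linarith,
    show (1 + 2 * ((j : ℝ) + k) - (m + n) - s) / 2 = 1 / 2 - t by linarith, Real.rpow_natCast,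
    hermLinCoeff_mul_integral_Herm_two_mul hβ]

end Gaussian

/-- Krein-like 2-functional of Hermite polynomials
(differential-equation approach). -/
theorem hermite_krein_2_functional_diffeq (m n s : ℕ) (hpar : Even (m + n + s))
    (β : ℝ) (hβ : 0 < β) :
    ∫ x : ℝ, x ^ s * Real.exp (-β * x ^ 2) * Herm m x * Herm n x =
      (Real.sqrt β)⁻¹ *
        ∑ j ∈ Finset.range ((m + s) / 2 + 1),
          (((2 : ℝ) ^ ((m : ℝ) - (s : ℝ)) * (m.factorial : ℝ) * (s.factorial : ℝ) /
              ((m + s - 2 * j).factorial : ℝ)) *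
            ∑ k ∈ Finset.Icc (m - 2 * j) (min (m + s - 2 * j) m),
              ((m + s - 2 * j).choose k : ℝ) *
                (((2 : ℝ) ^ k * ((m - k).factorial : ℝ))⁻¹ * invFacZ ((k : ℤ) + j - m))) *
          ∑ k ∈ Finset.range (min (m + s - 2 * j) n + 1),
            ((m + s - 2 * j).choose k : ℝ) * (n.choose k : ℝ) *
              ((2 : ℝ) ^ (-(2 : ℝ) * j - (k : ℝ) + (m : ℝ) + (n : ℝ) + (s : ℝ)) * π *
                  (k.factorial : ℝ) /
                Real.Gamma ((1 + 2 * ((j : ℝ) + (k : ℝ)) - ((m : ℝ) + (n : ℝ)) - (s : ℝ)) / 2)) *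
              ((β - 1) / β) ^ ((m + n + s - 2 * (j + k)) / 2) := by
  rw [integral_pow_mul_exp_mul_Herm_mul_Herm hβ, mul_sum]
  refine sum_congr rfl fun j hj => ?_
  have hj : 2 * j ≤ m + s := by simp only [mem_range] at hj; omega
  rw [powMulHermCoeff_eq m s j hj, mul_left_comm, mul_sum (range (min (m + s - 2 * j) n + 1)),
    ← sum_subset (range_subset_range.2 (Nat.succ_le_succ (min_le_right (m + s - 2 * j) n)))
      fun k hk hk' => by
        rw [hermLinCoeff_eq_zero_of_lt_left (by simp only [mem_range] at hk hk'; omega), zero_mul]]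
  exact congrArg _ (sum_congr rfl fun k hk =>
    hermLinCoeff_mul_integral_Herm_eq hβ hpar hj (Nat.lt_succ_iff.1 (mem_range.1 hk)))
end
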